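/- Let G be a bi-orderable group, let t, x ∈ G, and let s ≥ 1 and m ≥ 2. Set z_j = t^j x t^{−j} for 0 ≤ j ≤ s+1, and let D be a nonempty finite product of elements taken (with repetition allowed) from {z₀, z₁, ..., z_{s−1}}. If z_s (D z_{s+1}) z_s⁻¹ = (D z_{s+1})ᵐ, then x = 1. -/

import Mathlib

/-! Fix a bi-invariant order and suppose `x > 1` (otherwise reverse the order). Every conjugate
of `x` is then `> 1`, so `W = D z_{s+1}` exceeds both `z_{s+1}` and any factor `z_j` of `D`.
If `W ≥ z_s`, then `W ^ m = z_s W z_s⁻¹ < z_s W ≤ W ^ 2`, impossible for `m ≥ 2`; hence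
`z_{s+1} < W < z_s`. Conjugation by `t` shifts the sequence `z` and preserves the order, so `z`
is strictly decreasing, and `z_s < z_j < W < z_s` for `j < s`. -/

/-- A group is bi-orderable if there is a linear (strict total) order on it which is
invariant under both left and right multiplication. -/
def IsBiOrderable (G : Type*) [Group G] : Prop :=
  ∃ lt : G → G → Prop, IsStrictTotalOrder G lt ∧
    (∀ f g h : G, lt g h → lt (f * g) (f * h)) ∧
    (∀ f g h : G, lt g h → lt (g * f) (h * f))

theorem List.le_prod_of_mem_of_one_le {M : Type*} [Monoid M] [Preorder M] [MulLeftMono M]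
    [MulRightMono M] {l : List M} (hl : ∀ x ∈ l, 1 ≤ x) {a : M} (ha : a ∈ l) : a ≤ l.prod := by
  induction l with
  | nil => simp at ha
  | cons y ys ih =>
    rw [List.forall_mem_cons] at hl
    rw [List.prod_cons]
    rcases List.mem_cons.1 ha with rfl | ha
    · exact le_mul_of_one_le_right' (List.one_le_prod_of_one_le hl.2)
    · exact (ih hl.2 ha).trans (le_mul_of_one_le_left' hl.1)

theorem IsBiOrderable.elim {G : Type*} [Group G] {p : Prop} (hG : IsBiOrderable G)
    (h : ∀ _ : LinearOrder G, MulLeftMono G → MulRightMono G → p) : p := by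
  obtain ⟨r, hr, hleft, hright⟩ := hG
  let _ : LinearOrder G := @linearOrderOfSTO G r hr (Classical.decRel r)
  have _ : MulLeftStrictMono G := ⟨fun f _ _ => hleft f _ _⟩
  have _ : MulRightStrictMono G := ⟨fun f _ _ => hright f _ _⟩
  exact h _ (mulLeftMono_of_mulLeftStrictMono G) (mulRightMono_of_mulRightStrictMono G)

section BiOrderedGroup

variable {G : Type*} [Group G] [LinearOrder G] [MulLeftMono G] [MulRightMono G]

theorem conj_lt_conj_iff (g : G) {a b : G} : g * a * g⁻¹ < g * b * g⁻¹ ↔ a < b := by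
  rw [mul_lt_mul_iff_right, mul_lt_mul_iff_left]

theorem one_lt_conj_iff (g : G) {a : G} : 1 < g * a * g⁻¹ ↔ 1 < a := by
  simpa only [mul_one, mul_inv_cancel] using conj_lt_conj_iff g (a := 1) (b := a)

theorem lt_of_conj_eq_pow {g a : G} {m : ℕ} (hg : 1 < g) (ha : 1 ≤ a) (hm : 2 ≤ m)
    (h : g * a * g⁻¹ = a ^ m) : a < g := by
  by_contra! hga
  have : a ^ m < a ^ m := calc
    a ^ m = g * a * g⁻¹ := h.symm
    _ < g * a := mul_lt_of_lt_one_right' _ (inv_lt_one'.2 hg)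
    _ ≤ a * a := mul_le_mul_left hga a
    _ = a ^ 2 := (sq a).symm
    _ ≤ a ^ m := pow_le_pow_right' ha hm
  exact this.false

theorem strictAnti_of_conj_succ {t : G} {z : ℕ → G} (hz : ∀ j, z (j + 1) = t * z j * t⁻¹)
    {s : ℕ} (hs : z (s + 1) < z s) : StrictAnti z := by
  have step : ∀ j, z (j + 1) < z j ↔ z 1 < z 0 := by
    intro j
    induction j with
    | zero => rfl
    | succ j ih => rw [hz (j + 1), hz j, conj_lt_conj_iff, ← hz j, ih]
  exact strictAnti_nat_of_succ_lt fun j => (step j).2 ((step s).1 hs)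

theorem not_one_lt_of_conj_eq_pow (t x : G) (s m : ℕ) (hm : 2 ≤ m)
    (z : ℕ → G) (hz : ∀ j, z j = t ^ j * x * (t ^ j)⁻¹)
    (w : List (Fin s)) (hw : w ≠ []) (D : G) (hD : D = (w.map fun j => z (j : ℕ)).prod)
    (h : z s * (D * z (s + 1)) * (z s)⁻¹ = (D * z (s + 1)) ^ m) : ¬ 1 < x := by
  intro hx
  have hz_pos (j : ℕ) : 1 < z j := hz j ▸ (one_lt_conj_iff _).2 hx
  obtain ⟨j, hj⟩ := List.exists_mem_of_ne_nil w hw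
  have hzD : z j ≤ D := by
    -- the cast in `hD` turns `w` into a list of naturals before mapping
    rw [hD]
    exact List.le_prod_of_mem_of_one_le (by simp [(hz_pos _).le]) (by simpa using ⟨j, hj, rfl⟩)
  have hD_pos : 1 < D := (hz_pos j).trans_le hzD
  have hD_lt : D < D * z (s + 1) := lt_mul_of_one_lt_right' D (hz_pos _)
  have h_lt_zs : D * z (s + 1) < z s :=
    lt_of_conj_eq_pow (hz_pos s) (hD_pos.trans hD_lt).le hm h
  have hz_anti : StrictAnti z := by
    refine strictAnti_of_conj_succ (t := t) (fun i => ?_)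
      ((lt_mul_of_one_lt_left' _ hD_pos).trans h_lt_zs)
    rw [hz, hz, pow_succ']
    group
  exact (hz_anti j.isLt).asymm (hzD.trans_lt (hD_lt.trans h_lt_zs))

end BiOrderedGroup

theorem eq_one_of_biorderable_general_general {G : Type*} [Group G] (hG : IsBiOrderable G)
    (t x : G) (s m : ℕ) (hm : 2 ≤ m)
    (z : ℕ → G) (hz : ∀ j, z j = t ^ j * x * (t ^ j)⁻¹)
    (w : List (Fin s)) (hw : w ≠ []) (D : G) (hD : D = (w.map fun j => z (j : ℕ)).prod)
    (h : z s * (D * z (s + 1)) * (z s)⁻¹ = (D * z (s + 1)) ^ m) : x = 1 := by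
  refine hG.elim fun _ _ _ => ?_
  rcases lt_trichotomy x 1 with hx | hx | hx
  · exact absurd hx (not_one_lt_of_conj_eq_pow (G := Gᵒᵈ) t x s m hm z hz w hw D hD h)
  · exact hx
  · exact absurd hx (not_one_lt_of_conj_eq_pow t x s m hm z hz w hw D hD h)

/-- Let `G` be a bi-orderable group, `t, x ∈ G`, `s ≥ 1`, `m ≥ 2`.
Set `z j = t^j x t^{-j}`, and let `D` be a nonempty finite product of elements from
`{z 0, …, z (s-1)}` (encoded by a nonempty list `w` over `Fin s`).
If `z s (D z_{s+1}) (z s)⁻¹ = (D z_{s+1})^m` then `x = 1`. -/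
theorem eq_one_of_biorderable_general {G : Type*} [Group G] (hG : IsBiOrderable G)
    (t x : G) (s m : ℕ) (hs : 1 ≤ s) (hm : 2 ≤ m)
    (z : ℕ → G) (hz : ∀ j, z j = t ^ j * x * (t ^ j)⁻¹)
    (w : List (Fin s)) (hw : w ≠ []) (D : G) (hD : D = (w.map fun j => z (j : ℕ)).prod)
    (h : z s * (D * z (s + 1)) * (z s)⁻¹ = (D * z (s + 1)) ^ m) : x = 1 :=
  eq_one_of_biorderable_general_general hG t x s m hm z hz w hw D hD h
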